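/- Assume the spectral setup. Then for every t ≥ 0 and x ∈ ℝ, tr(K_t(x) ρ_0 K_t(x)†) = Σ_{r=1}^D tr(ρ_0 P_r) · exp(σ E_r x − (σ²/2) E_r² t), where the right side is a sum of nonnegative real multiples of real exponentials. -/

import Mathlib

open Matrix
open scoped ComplexOrder

section Aux

variable {N D : ℕ}

private lemma aux_pow_spec (c : Fin D → ℂ) (P : Fin D → Matrix (Fin N) (Fin N) ℂ)
    (hPorth : ∀ r s, r ≠ s → P r * P s = 0)
    (hPidem : ∀ r, P r * P r = P r)
    (hPsum : ∑ r, P r = 1) :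
    ∀ n : ℕ, (∑ r, c r • P r) ^ n = ∑ r, (c r) ^ n • P r := by
  intro n
  induction n with
  | zero => simpa using hPsum.symm
  | succ n ih =>
    rw [pow_succ, ih, Finset.sum_mul_sum]
    refine Finset.sum_congr rfl fun r _ => ?_
    rw [Finset.sum_eq_single r]
    · rw [smul_mul_assoc, mul_smul_comm, hPidem r, smul_smul, ← pow_succ]
    · intro s _ hs
      rw [smul_mul_assoc, mul_smul_comm, hPorth r s hs.symm, smul_zero, smul_zero]
    · intro h; exact absurd (Finset.mem_univ r) h

private lemma aux_exp_spec (c : Fin D → ℂ) (P : Fin D → Matrix (Fin N) (Fin N) ℂ)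
    (hPorth : ∀ r s, r ≠ s → P r * P s = 0)
    (hPidem : ∀ r, P r * P r = P r)
    (hPsum : ∑ r, P r = 1) :
    NormedSpace.exp (∑ r, c r • P r) = ∑ r, Complex.exp (c r) • P r := by
  have hsummable : ∀ r : Fin D, Summable fun n : ℕ => (n.factorial : ℂ)⁻¹ * c r ^ n := by
    intro r
    simpa [smul_eq_mul] using NormedSpace.expSeries_summable' (𝕂 := ℂ) (c r)
  rw [NormedSpace.exp_eq_tsum ℂ]
  simp only [aux_pow_spec c P hPorth hPidem hPsum, Finset.smul_sum, smul_smul]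
  rw [Summable.tsum_finsetSum (fun r _ => (hsummable r).smul_const (P r))]
  refine Finset.sum_congr rfl fun r _ => ?_
  rw [Summable.tsum_smul_const (hsummable r)]
  congr 1
  rw [Complex.exp_eq_exp_ℂ, NormedSpace.exp_eq_tsum ℂ]
  simp [smul_eq_mul]

private lemma aux_trace_nonneg {M : Matrix (Fin N) (Fin N) ℂ} (hM : M.PosSemidef) :
    0 ≤ M.trace := by
  exact hM.trace_nonneg

end Aux

/-- Spectral setup: `tr(K_t(x) ρ₀ K_t(x)†) = Σ_r tr(ρ₀ P_r) exp(σ E_r x − σ²E_r²t/2)`,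
a sum of nonnegative real multiples of real exponentials. -/
theorem trace_of_unnormalized_state
    (N : ℕ) (hN : 1 ≤ N) (σ ℏ : ℝ) (hσ : 0 < σ) (hℏ : 0 < ℏ)
    (Hhat : Matrix (Fin N) (Fin N) ℂ) (hHherm : Hhat.IsHermitian)
    (D : ℕ) (hD : 1 ≤ D) (E : Fin D → ℝ) (hE : Function.Injective E)
    (P : Fin D → Matrix (Fin N) (Fin N) ℂ)
    (hPherm : ∀ r, (P r).IsHermitian)
    (hPorth : ∀ r s, r ≠ s → P r * P s = 0)
    (hPidem : ∀ r, P r * P r = P r)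
    (hPsum : ∑ r, P r = 1)
    (hHspec : Hhat = ∑ r, (E r : ℂ) • P r)
    (ρ0 : Matrix (Fin N) (Fin N) ℂ) (hρ0 : ρ0.PosSemidef) (hρ0tr : ρ0.trace = 1)
    (K : ℝ → ℝ → Matrix (Fin N) (Fin N) ℂ)
    (hK : ∀ t x, K t x = NormedSpace.exp
      ((-Complex.I * ((ℏ⁻¹ * t : ℝ) : ℂ)) • Hhat
        + ((σ / 2 * x : ℝ) : ℂ) • Hhat - ((σ ^ 2 / 4 * t : ℝ) : ℂ) • Hhat ^ 2)) :
    ∀ t ≥ (0 : ℝ), ∀ x : ℝ,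
      (K t x * ρ0 * (K t x)ᴴ).trace
        = ∑ r, (ρ0 * P r).trace
            * ((Real.exp (σ * E r * x - σ ^ 2 / 2 * (E r) ^ 2 * t) : ℝ) : ℂ)
      ∧ ∀ r, 0 ≤ ((ρ0 * P r).trace).re ∧ ((ρ0 * P r).trace).im = 0 := by
  intro t ht x
  -- the scalar exponents
  set c : Fin D → ℂ := fun r =>
    (-Complex.I * ((ℏ⁻¹ * t : ℝ) : ℂ) + ((σ / 2 * x : ℝ) : ℂ)) * (E r : ℂ)
      - ((σ ^ 2 / 4 * t : ℝ) : ℂ) * (E r : ℂ) ^ 2 with hc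
  have hH2 : Hhat ^ 2 = ∑ r, ((E r : ℂ)) ^ 2 • P r := by
    rw [hHspec]; exact aux_pow_spec _ P hPorth hPidem hPsum 2
  have harg : (-Complex.I * ((ℏ⁻¹ * t : ℝ) : ℂ)) • Hhat
        + ((σ / 2 * x : ℝ) : ℂ) • Hhat - ((σ ^ 2 / 4 * t : ℝ) : ℂ) • Hhat ^ 2
      = ∑ r, c r • P r := by
    rw [hH2, hHspec, Finset.smul_sum, Finset.smul_sum, Finset.smul_sum,
      ← Finset.sum_add_distrib, ← Finset.sum_sub_distrib]
    refine Finset.sum_congr rfl fun r _ => ?_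
    rw [smul_smul, smul_smul, smul_smul, ← add_smul, ← sub_smul]
    congr 1
    simp only [hc]
    ring
  have hKeq : K t x = ∑ r, Complex.exp (c r) • P r := by
    rw [hK, harg, aux_exp_spec c P hPorth hPidem hPsum]
  have hKH : (K t x)ᴴ = ∑ r, (starRingEnd ℂ) (Complex.exp (c r)) • P r := by
    rw [hKeq, conjTranspose_sum]
    exact Finset.sum_congr rfl fun r _ => by
      rw [conjTranspose_smul, (hPherm r).eq]; rfl
  -- key scalar identity
  have hscal : ∀ r, Complex.exp (c r) * (starRingEnd ℂ) (Complex.exp (c r))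
      = ((Real.exp (σ * E r * x - σ ^ 2 / 2 * (E r) ^ 2 * t) : ℝ) : ℂ) := by
    intro r
    rw [← Complex.exp_conj, ← Complex.exp_add, Complex.ofReal_exp]
    congr 1
    simp only [hc, map_sub, map_add, _root_.map_mul, map_pow, map_neg, Complex.conj_I,
      Complex.conj_ofReal]
    push_cast
    ring
  -- nonnegativity of the weights
  have htrP : ∀ r, (ρ0 * P r).trace = (P r * ρ0 * P r).trace := by
    intro r
    rw [Matrix.trace_mul_cycle (P r) ρ0 (P r), hPidem r, Matrix.trace_mul_comm]
  have hnn : ∀ r, 0 ≤ (ρ0 * P r).trace := by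
    intro r
    rw [htrP r]
    have hpsd : (P r * ρ0 * P r).PosSemidef := by
      have := hρ0.conjTranspose_mul_mul_same (P r)
      rwa [(hPherm r).eq] at this
    exact aux_trace_nonneg hpsd
  refine ⟨?_, fun r => ?_⟩
  · rw [hKH, hKeq, Finset.sum_mul, Finset.sum_mul]
    rw [Matrix.trace_sum]
    refine Finset.sum_congr rfl fun r _ => ?_
    rw [Finset.mul_sum, Matrix.trace_sum, Finset.sum_eq_single r]
    · simp only [smul_mul_assoc, mul_smul_comm, smul_smul, Matrix.trace_smul]
      rw [Matrix.trace_mul_cycle (P r) ρ0 (P r), hPidem r, Matrix.trace_mul_comm,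
        smul_eq_mul]
      rw [mul_comm ((starRingEnd ℂ) (Complex.exp (c r))) (Complex.exp (c r)), hscal r]
      ring
    · intro s _ hs
      simp only [smul_mul_assoc, mul_smul_comm, smul_smul, Matrix.trace_smul]
      rw [Matrix.trace_mul_cycle (P r) ρ0 (P s), hPorth s r hs, Matrix.zero_mul,
        Matrix.trace_zero, smul_zero]
    · intro h; exact absurd (Finset.mem_univ r) h
  · have := hnn r
    rw [Complex.nonneg_iff] at this
    exact ⟨this.1, this.2.symm⟩
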